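/- arXiv:2011.10151 — 2 statements merged into one kernel-verified Lean document; each statement's English description precedes it below -/
import Mathlib

section
/- Let ν ∈ F_{C_n} and define b : F(Σ,V) → {0,1} by b(α) = ν(α)_1 (the first coordinate of the snapshot ν(α)). Then b is a C_n-bivaluation, and b(α) = 1 if and only if ν(α) ∈ D_n. -/
/-- Formulas over the signature Σ (¬ unary; ∧, ∨, → binary). -/
inductive PFs : Type
  | var : ℕ → PFs
  | neg : PFs → PFs
  | and : PFs → PFs → PFs
  | or : PFs → PFs → PFs
  | imp : PFs → PFs → PFs

/-- `pw α k` is `α^k`: `α^0 = α` and `α^{j+1} = ¬(α^j ∧ ¬(α^j))`. -/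
def pw (α : PFs) : ℕ → PFs
  | 0 => α
  | k + 1 => PFs.neg ((pw α k).and (PFs.neg (pw α k)))

/-- Snapshots for `C_n`: `(n+1)`-tuples over `2` with at most one coordinate
equal to `0` (i.e. `false`). -/
def Snap (n : ℕ) : Type :=
  {z : Fin (n + 1) → Bool // ∀ i j : Fin (n + 1), z i = false → z j = false → i = j}

/-- `T_n = (1,0,1,…,1)`. -/
def Tval (n : ℕ) : Snap n :=
  ⟨fun i => decide ((i : ℕ) ≠ 1), by
    intro i j hi hj
    simp only [decide_eq_false_iff_not, not_not] at hi hj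
    exact Fin.ext (hi.trans hj.symm)⟩

/-- `F_n = (0,1,1,…,1)`. -/
def Fval (n : ℕ) : Snap n :=
  ⟨fun i => decide ((i : ℕ) ≠ 0), by
    intro i j hi hj
    simp only [decide_eq_false_iff_not, not_not] at hi hj
    exact Fin.ext (hi.trans hj.symm)⟩

/-- `t^n_i`: all coordinates `1` except (when it exists) the one in position
`i+3`, i.e. index `i+2`; for `i = n-1` all coordinates equal `1`. -/
def tval (n i : ℕ) : Snap n :=
  ⟨fun j => decide ((j : ℕ) ≠ i + 2), by
    intro j j' hj hj'
    simp only [decide_eq_false_iff_not, not_not] at hj hj'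
    exact Fin.ext (hj.trans hj'.symm)⟩

/-- Designated values `D_n = B_n \ {F_n} = {z : z₁ = 1}`. -/
def Dn (n : ℕ) : Set (Snap n) := {z | z.1 0 = true}

/-- Boolean values `Boo_n = {z : z₁ ∧ z₂ = 0}`. -/
def BooN (n : ℕ) : Set (Snap n) := {z | (z.1 0 && z.1 1) = false}

/-- Inconsistent values `I_n = B_n \ {T_n, F_n}`. -/
def InN (n : ℕ) : Set (Snap n) := {z | z ≠ Tval n ∧ z ≠ Fval n}

/-- `¬̃ z = {w : w₁ = z₂ and w₂ ≤ z₁}`. -/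
def negN {n : ℕ} (z : Snap n) : Set (Snap n) :=
  {w | w.1 0 = z.1 1 ∧ (w.1 1 = true → z.1 0 = true)}

open Classical in
/-- `z #̃ w`: Boolean (inside `Boo_n`) when both arguments are Boolean values,
non-deterministic (first coordinate determined classically) otherwise. -/
noncomputable def binN {n : ℕ} (f : Bool → Bool → Bool) (z w : Snap n) :
    Set (Snap n) :=
  if z ∈ BooN n ∧ w ∈ BooN n then
    {u | u ∈ BooN n ∧ u.1 0 = f (z.1 0) (w.1 0)}
  else
    {u | u.1 0 = f (z.1 0) (w.1 0)}

/-- `ν` is a multialgebra homomorphism into `A_{C_n}`. -/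
def IsHomN (n : ℕ) (ν : PFs → Snap n) : Prop :=
  (∀ α, ν (PFs.neg α) ∈ negN (ν α)) ∧
  (∀ α β, ν (PFs.and α β) ∈ binN (· && ·) (ν α) (ν β)) ∧
  (∀ α β, ν (PFs.or α β) ∈ binN (· || ·) (ν α) (ν β)) ∧
  (∀ α β, ν (PFs.imp α β) ∈ binN (fun a b => !a || b) (ν α) (ν β))

/-- `ν ∈ F_{C_n}`: a homomorphism satisfying the restrictions on valuations. -/
def FCn (n : ℕ) (ν : PFs → Snap n) : Prop :=
  IsHomN n ν ∧
  (∀ α, ν α = tval n 0 → ν (PFs.and α (PFs.neg α)) = Tval n) ∧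
  (∀ α k, 1 ≤ k → k ≤ n - 1 → ν α = tval n k →
    ν (PFs.and α (PFs.neg α)) ∈ InN n ∧ ν (pw α 1) = tval n (k - 1))

/-- `b` is a `C_n`-bivaluation: clauses (B1)–(B5), (B6)_n, (B7), (B8). -/
def IsBivN (n : ℕ) (b : PFs → Bool) : Prop :=
  (∀ α β, b (PFs.and α β) = true ↔ (b α = true ∧ b β = true)) ∧
  (∀ α β, b (PFs.or α β) = true ↔ (b α = true ∨ b β = true)) ∧
  (∀ α β, b (PFs.imp α β) = true ↔ (b α = false ∨ b β = true)) ∧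
  (∀ α, b α = false → b (PFs.neg α) = true) ∧
  (∀ α, b (PFs.neg (PFs.neg α)) = true → b α = true) ∧
  (∀ α, b (pw α (n - 1)) = b (PFs.neg (pw α (n - 1))) ↔ b (pw α n) = false) ∧
  (∀ α, b α = b (PFs.neg α) ↔ b (PFs.neg (pw α 1)) = true) ∧
  (∀ α β, b α ≠ b (PFs.neg α) → b β ≠ b (PFs.neg β) →
    (b (PFs.and α β) ≠ b (PFs.neg (PFs.and α β)) ∧
     b (PFs.or α β) ≠ b (PFs.neg (PFs.or α β)) ∧
     b (PFs.imp α β) ≠ b (PFs.neg (PFs.imp α β))))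


section Aux

variable {n : ℕ}

lemma snap_true_of_false (z : Snap n) {i j : Fin (n + 1)} (hij : j ≠ i)
    (hi : z.1 i = false) : z.1 j = true := by
  cases h : z.1 j with
  | false => exact absurd (z.2 j i h hi) hij
  | true => rfl

lemma val1 (hn : 2 ≤ n) : ((1 : Fin (n+1)) : ℕ) = 1 := by
  rw [Fin.val_one']; exact Nat.mod_eq_of_lt (by omega)

lemma tval_coord (hn : 2 ≤ n) (k : ℕ) :
    (tval n k).1 0 = true ∧ (tval n k).1 1 = true := by
  constructor
  · show decide (((0 : Fin (n+1)) : ℕ) ≠ k + 2) = true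
    rw [Fin.val_zero]; simp
  · show decide (((1 : Fin (n+1)) : ℕ) ≠ k + 2) = true
    rw [val1 hn]; simp

lemma Tval_coord (hn : 2 ≤ n) : (Tval n).1 0 = true ∧ (Tval n).1 1 = false := by
  constructor
  · show decide (((0 : Fin (n+1)) : ℕ) ≠ 1) = true
    rw [Fin.val_zero]; simp
  · show decide (((1 : Fin (n+1)) : ℕ) ≠ 1) = false
    rw [val1 hn]; simp

lemma Fval_coord (hn : 2 ≤ n) : (Fval n).1 0 = false ∧ (Fval n).1 1 = true := by
  constructor
  · show decide (((0 : Fin (n+1)) : ℕ) ≠ 0) = false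
    rw [Fin.val_zero]; simp
  · show decide (((1 : Fin (n+1)) : ℕ) ≠ 0) = true
    rw [val1 hn]; simp

lemma eq_Fval (hn : 2 ≤ n) (z : Snap n) (h : z.1 0 = false) : z = Fval n := by
  apply Subtype.ext; funext j
  by_cases hj : j = 0
  · subst hj; rw [h, (Fval_coord hn).1]
  · rw [snap_true_of_false z hj h]
    show true = decide ((j : ℕ) ≠ 0)
    have : (j : ℕ) ≠ 0 := fun hc => hj (Fin.ext (by rw [hc, Fin.val_zero]))
    simp [this]

lemma eq_Tval (hn : 2 ≤ n) (z : Snap n) (h : z.1 1 = false) : z = Tval n := by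
  apply Subtype.ext; funext j
  by_cases hj : j = 1
  · subst hj; rw [h, (Tval_coord hn).2]
  · rw [snap_true_of_false z hj h]
    show true = decide ((j : ℕ) ≠ 1)
    have : (j : ℕ) ≠ 1 := fun hc => hj (Fin.ext (by rw [hc, val1 hn]))
    simp [this]

lemma fzero_ne_one (hn : 2 ≤ n) : (0 : Fin (n+1)) ≠ 1 := by
  intro h
  have := congrArg (Fin.val) h
  rw [Fin.val_zero, val1 hn] at this
  exact absurd this (by omega)

lemma ne01_iff (hn : 2 ≤ n) (z : Snap n) :
    z.1 0 ≠ z.1 1 ↔ z ∈ BooN n := by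
  constructor
  · intro h
    cases h0 : z.1 0 <;> cases h1 : z.1 1 <;>
      simp_all [BooN, Set.mem_setOf_eq]
  · intro h he
    cases h0 : z.1 0 with
    | false => exact fzero_ne_one hn (z.2 0 1 h0 (he ▸ h0))
    | true =>
      rw [h0] at he
      simp [BooN, Set.mem_setOf_eq, h0, ← he] at h

lemma snap_class (hn : 2 ≤ n) (z : Snap n) (h : z ∉ BooN n) :
    ∃ k, k ≤ n - 1 ∧ z = tval n k := by
  have h0 : z.1 0 = true := by
    cases h0 : z.1 0
    · exact absurd (by simp [BooN, Set.mem_setOf_eq, h0]) h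
    · rfl
  have h1 : z.1 1 = true := by
    cases h1 : z.1 1
    · exact absurd (by simp [BooN, Set.mem_setOf_eq, h0, h1]) h
    · rfl
  by_cases hex : ∃ i, z.1 i = false
  · obtain ⟨i, hi⟩ := hex
    have hi2 : 2 ≤ (i : ℕ) := by
      by_contra hge
      push_neg at hge
      interval_cases hI : (i : ℕ)
      · have : i = 0 := Fin.ext (by rw [hI, Fin.val_zero])
        rw [this, h0] at hi; exact absurd hi (by simp)
      · have : i = 1 := Fin.ext (by rw [hI, val1 hn])
        rw [this, h1] at hi; exact absurd hi (by simp)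
    refine ⟨(i : ℕ) - 2, by omega, ?_⟩
    apply Subtype.ext; funext j
    by_cases hj : j = i
    · subst hj
      rw [hi]
      show false = decide ((j : ℕ) ≠ (j : ℕ) - 2 + 2)
      simp; omega
    · rw [snap_true_of_false z hj hi]
      show true = decide ((j : ℕ) ≠ (i : ℕ) - 2 + 2)
      have : (j : ℕ) ≠ (i : ℕ) - 2 + 2 := fun hc => hj (Fin.ext (by omega))
      simp [this]
  · push_neg at hex
    refine ⟨n - 1, le_refl _, ?_⟩
    apply Subtype.ext; funext j
    have hjt : z.1 j = true := by
      cases hzj : z.1 j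
      · exact absurd hzj (hex j)
      · rfl
    rw [hjt]
    show true = decide ((j : ℕ) ≠ n - 1 + 2)
    have hj := j.2
    have : (j : ℕ) ≠ n - 1 + 2 := by omega
    simp [this]

variable {ν : PFs → Snap n}

lemma neg_fst (hν : IsHomN n ν) (α : PFs) :
    (ν (PFs.neg α)).1 0 = (ν α).1 1 := (hν.1 α).1

lemma bin_fst {f : Bool → Bool → Bool} {z w u : Snap n} (h : u ∈ binN f z w) :
    u.1 0 = f (z.1 0) (w.1 0) := by
  unfold binN at h
  split at h
  · exact h.2
  · exact h

lemma neg_boo (hν : IsHomN n ν) (α : PFs) (h : ν α ∈ BooN n) :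
    ν (PFs.neg α) ∈ BooN n := by
  simp only [BooN, Set.mem_setOf_eq] at h ⊢
  cases h1 : (ν (PFs.neg α)).1 1 with
  | false => simp
  | true =>
    have h0 := (hν.1 α).2 h1
    rw [(hν.1 α).1]
    simp only [h0, Bool.true_and] at h
    simp [h]

/-- If `ν α` is Boolean, then `ν (α¹) = T_n`. -/
lemma pow_step_boo (hn : 2 ≤ n) (hν : IsHomN n ν) (α : PFs) (h : ν α ∈ BooN n) :
    ν (pw α 1) = Tval n := by
  have hp : ν (PFs.neg α) ∈ BooN n := neg_boo hν α h
  have hc := hν.2.1 α (PFs.neg α)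
  unfold binN at hc
  rw [if_pos ⟨h, hp⟩] at hc
  have hc0 : (ν (PFs.and α (PFs.neg α))).1 0 = false := by
    rw [hc.2, (hν.1 α).1]
    simpa [BooN, Set.mem_setOf_eq] using h
  have hs := hν.1 (PFs.and α (PFs.neg α))
  apply eq_Tval hn
  cases hs1 : (ν (pw α 1)).1 1 with
  | false => rfl
  | true =>
    have := hs.2 hs1
    rw [hc0] at this
    exact absurd this (by simp)

/-- If `ν α = t^n_0`, then `ν (α¹) = F_n`. -/
lemma pow_step_t0 (hn : 2 ≤ n) (hν : FCn n ν) (α : PFs) (h : ν α = tval n 0) :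
    ν (pw α 1) = Fval n := by
  have hc := hν.2.1 α h
  have hs := hν.1.1 (PFs.and α (PFs.neg α))
  apply eq_Fval hn
  show (ν (PFs.neg (PFs.and α (PFs.neg α)))).1 0 = false
  rw [hs.1, hc, (Tval_coord hn).2]

lemma tval_not_boo (hn : 2 ≤ n) (k : ℕ) : tval n k ∉ BooN n := by
  simp [BooN, Set.mem_setOf_eq, (tval_coord hn k).1, (tval_coord hn k).2]

lemma Tval_boo (hn : 2 ≤ n) : Tval n ∈ BooN n := by
  simp [BooN, Set.mem_setOf_eq, (Tval_coord hn).2]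

lemma Fval_boo (hn : 2 ≤ n) : Fval n ∈ BooN n := by
  simp [BooN, Set.mem_setOf_eq, (Fval_coord hn).1]

lemma pow_class (hn : 2 ≤ n) (hν : FCn n ν) (α : PFs) :
    ∀ m, 1 ≤ m →
      ν (pw α m) ∈ BooN n ∨ ∃ k, k + m ≤ n - 1 ∧ ν (pw α m) = tval n k := by
  intro m
  induction m with
  | zero => omega
  | succ m ih =>
    intro _
    have step : ∀ β, (ν β ∈ BooN n ∨ ∃ k, k + m ≤ n - 1 ∧ ν β = tval n k) →
        pw α (m+1) = pw β 1 →
        ν (pw α (m+1)) ∈ BooN n ∨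
          ∃ k, k + (m+1) ≤ n - 1 ∧ ν (pw α (m+1)) = tval n k := by
      intro β hβ hpw
      rw [hpw]
      rcases hβ with hb | ⟨k, hk, ht⟩
      · exact Or.inl ((pow_step_boo hn hν.1 β hb) ▸ Tval_boo hn)
      · rcases Nat.eq_zero_or_pos k with rfl | hk1
        · exact Or.inl ((pow_step_t0 hn hν β ht) ▸ Fval_boo hn)
        · have := (hν.2.2 β k hk1 (by omega) ht).2
          exact Or.inr ⟨k - 1, by omega, this⟩
    rcases Nat.eq_zero_or_pos m with rfl | hm
    · by_cases hb : ν α ∈ BooN n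
      · exact step α (Or.inl hb) rfl
      · obtain ⟨k, hk, ht⟩ := snap_class hn (ν α) hb
        rcases Nat.eq_zero_or_pos k with rfl | hk1
        · exact step α (Or.inr ⟨0, by omega, ht⟩) rfl
        · rcases Nat.lt_or_ge k (n - 1) with hlt | hge
          · exact step α (Or.inr ⟨k, by omega, ht⟩) rfl
          · have hkn : k = n - 1 := by omega
            subst hkn
            have := (hν.2.2 α (n-1) hk1 (le_refl _) ht).2
            exact Or.inr ⟨n - 1 - 1, by omega, this⟩
    · exact step (pw α m) (ih hm) rfl

end Aux

/-- if `ν ∈ F_{C_n}` then `b(α) := (ν α)₁` (the first coordinate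
of the snapshot `ν(α)`) is a `C_n`-bivaluation, and `b(α) = 1` iff
`ν(α) ∈ D_n`. -/
theorem stmt_12 (n : ℕ) (hn : 2 ≤ n) (ν : PFs → Snap n) (hν : FCn n ν) :
    IsBivN n (fun α => (ν α).1 0) ∧
    (∀ α, (ν α).1 0 = true ↔ ν α ∈ Dn n) := by
  refine ⟨⟨?_, ?_, ?_, ?_, ?_, ?_, ?_, ?_⟩, fun α => Iff.rfl⟩
  · -- B1
    intro α β
    show (ν (PFs.and α β)).1 0 = true ↔ ((ν α).1 0 = true ∧ (ν β).1 0 = true)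
    rw [bin_fst (hν.1.2.1 α β)]
    exact iff_of_eq (Bool.and_eq_true _ _)
  · -- B2
    intro α β
    show (ν (PFs.or α β)).1 0 = true ↔ ((ν α).1 0 = true ∨ (ν β).1 0 = true)
    rw [bin_fst (hν.1.2.2.1 α β)]
    exact iff_of_eq (Bool.or_eq_true _ _)
  · -- B3
    intro α β
    show (ν (PFs.imp α β)).1 0 = true ↔ ((ν α).1 0 = false ∨ (ν β).1 0 = true)
    rw [bin_fst (hν.1.2.2.2 α β)]
    cases h1 : (ν α).1 0 <;> cases h2 : (ν β).1 0 <;> simp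
  · -- B4
    intro α h
    show (ν (PFs.neg α)).1 0 = true
    rw [neg_fst hν.1]
    exact snap_true_of_false (ν α) (Ne.symm (fzero_ne_one hn)) h
  · -- B5
    intro α h
    rw [show ((fun α => (ν α).1 0) (PFs.neg (PFs.neg α)) : Bool)
        = (ν (PFs.neg α)).1 1 from neg_fst hν.1 (PFs.neg α)] at h
    exact (hν.1.1 α).2 h
  · -- B6
    intro α
    show (ν (pw α (n-1))).1 0 = (ν (PFs.neg (pw α (n-1)))).1 0 ↔
      (ν (pw α n)).1 0 = false
    obtain ⟨m, rfl⟩ : ∃ m, n = m + 1 := ⟨n - 1, by omega⟩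
    simp only [Nat.add_sub_cancel]
    set γ := pw α m with hγ
    have hpw : pw α (m+1) = pw γ 1 := rfl
    rw [neg_fst hν.1, hpw]
    rcases pow_class hn hν α m (by omega) with hb | ⟨k, hk, ht⟩
    · have hne := (ne01_iff hn (ν γ)).mpr hb
      rw [pow_step_boo hn hν.1 γ hb, (Tval_coord hn).1]
      exact iff_of_false hne (by simp)
    · have hk0 : k = 0 := by omega
      subst hk0
      rw [pow_step_t0 hn hν γ ht, (Fval_coord hn).1, ht,
        (tval_coord hn 0).1, (tval_coord hn 0).2]
      simp
  · -- B7
    intro α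
    show (ν α).1 0 = (ν (PFs.neg α)).1 0 ↔ (ν (PFs.neg (pw α 1))).1 0 = true
    rw [neg_fst hν.1, neg_fst hν.1]
    by_cases hb : ν α ∈ BooN n
    · have hne := (ne01_iff hn (ν α)).mpr hb
      rw [pow_step_boo hn hν.1 α hb, (Tval_coord hn).2]
      exact iff_of_false hne (by simp)
    · obtain ⟨k, hk, ht⟩ := snap_class hn (ν α) hb
      have lhs : (ν α).1 0 = (ν α).1 1 := by
        rw [ht, (tval_coord hn k).1, (tval_coord hn k).2]
      have rhs : (ν (pw α 1)).1 1 = true := by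
        rcases Nat.eq_zero_or_pos k with rfl | hk1
        · rw [pow_step_t0 hn hν α ht, (Fval_coord hn).2]
        · rw [(hν.2.2 α k hk1 hk ht).2, (tval_coord hn (k-1)).2]
      exact iff_of_true lhs rhs
  · -- B8
    intro α β hα hβ
    have hba : ν α ∈ BooN n := (ne01_iff hn (ν α)).mp (by
      rw [show ((fun α => (ν α).1 0) (PFs.neg α) : Bool)
        = (ν α).1 1 from neg_fst hν.1 α] at hα
      exact hα)
    have hbb : ν β ∈ BooN n := (ne01_iff hn (ν β)).mp (by
      rw [show ((fun α => (ν α).1 0) (PFs.neg β) : Bool)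
        = (ν β).1 1 from neg_fst hν.1 β] at hβ
      exact hβ)
    have key : ∀ (γ : PFs) (f : Bool → Bool → Bool),
        ν γ ∈ binN f (ν α) (ν β) →
        (ν γ).1 0 ≠ (ν (PFs.neg γ)).1 0 := by
      intro γ f hmem
      unfold binN at hmem
      rw [if_pos ⟨hba, hbb⟩] at hmem
      rw [neg_fst hν.1]
      exact (ne01_iff hn (ν γ)).mpr hmem.1
    exact ⟨key _ _ (hν.1.2.1 α β), key _ _ (hν.1.2.2.1 α β),
      key _ _ (hν.1.2.2.2 α β)⟩
end

section
/- Let b be a C_n-bivaluation and define ν : F(Σ,V) → B_n by ν(α) = (b(α), b(¬α), b(α^1), ..., b(α^{n−1})). Then ν is a well-defined multialgebra homomorphism into A_{C_n} belonging to F_{C_n}, and b(α) = 1 if and only if ν(α) ∈ D_n. -/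
section Stmt13Aux

lemma pw_pw (α : PFs) (j : ℕ) : ∀ m, pw (pw α j) m = pw α (j + m)
  | 0 => rfl
  | m + 1 => by
    show PFs.neg ((pw (pw α j) m).and (PFs.neg (pw (pw α j) m))) = pw α (j + m + 1)
    rw [pw_pw α j m]
    rfl

/-- The coordinate function of `ν`. -/
def bg (b : PFs → Bool) (α : PFs) (i : ℕ) : Bool :=
  if i = 0 then b α else if i = 1 then b (PFs.neg α) else b (pw α (i - 1))

lemma bg_zero (b : PFs → Bool) (α : PFs) : bg b α 0 = b α := rfl

lemma bg_one (b : PFs → Bool) (α : PFs) : bg b α 1 = b (PFs.neg α) := rfl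

lemma bg_two (b : PFs → Bool) (α : PFs) (m : ℕ) :
    bg b α (m + 2) = b (pw α (m + 1)) := by
  simp [bg]

variable {b : PFs → Bool}

lemma cons_step (hB4 : ∀ α, b α = false → b (PFs.neg α) = true)
    (hB7 : ∀ α, b α = b (PFs.neg α) ↔ b (PFs.neg (pw α 1)) = true)
    {α : PFs} {j : ℕ} (h : b (pw α j) ≠ b (PFs.neg (pw α j))) :
    b (pw α (j + 1)) = true ∧ b (PFs.neg (pw α (j + 1))) = false := by
  have h7 := hB7 (pw α j)
  rw [show pw (pw α j) 1 = pw α (j + 1) from rfl] at h7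
  have hneg : b (PFs.neg (pw α (j + 1))) = false := by
    cases hc : b (PFs.neg (pw α (j + 1))) with
    | true => exact absurd (h7.mpr hc) h
    | false => rfl
  refine ⟨?_, hneg⟩
  cases hc : b (pw α (j + 1)) with
  | true => rfl
  | false => rw [hB4 _ hc] at hneg; cases hneg

lemma cons_ge (hB4 : ∀ α, b α = false → b (PFs.neg α) = true)
    (hB7 : ∀ α, b α = b (PFs.neg α) ↔ b (PFs.neg (pw α 1)) = true)
    (α : PFs) (j : ℕ) (h : b (pw α j) ≠ b (PFs.neg (pw α j))) :
    ∀ m, j < m → b (pw α m) = true ∧ b (PFs.neg (pw α m)) = false := by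
  intro m
  induction m with
  | zero => omega
  | succ m ih =>
    intro hlt
    rcases Nat.lt_succ_iff_lt_or_eq.mp hlt with h' | h'
    · have hm := ih h'
      exact cons_step hB4 hB7 (by rw [hm.1, hm.2]; simp)
    · subst h'; exact cons_step hB4 hB7 h

lemma false_lt (hB4 : ∀ α, b α = false → b (PFs.neg α) = true)
    (hB7 : ∀ α, b α = b (PFs.neg α) ↔ b (PFs.neg (pw α 1)) = true)
    (α : PFs) {j m : ℕ} (hf : b (pw α j) = false) (hlt : j < m) :
    b (pw α m) = true :=
  (cons_ge hB4 hB7 α j (by simp [hf, hB4 _ hf]) m hlt).1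

lemma bg_unique (hB4 : ∀ α, b α = false → b (PFs.neg α) = true)
    (hB7 : ∀ α, b α = b (PFs.neg α) ↔ b (PFs.neg (pw α 1)) = true)
    (α : PFs) : ∀ i j : ℕ, bg b α i = false → bg b α j = false → i = j := by
  have asym : ∀ i j : ℕ, i < j → bg b α i = false → bg b α j = true := by
    intro i j hlt hi
    rcases i with _ | _ | p <;> rcases j with _ | _ | q
    all_goals try omega
    · -- i = 0, j = 1
      rw [bg_zero] at hi
      rw [bg_one]
      exact hB4 α hi
    · -- i = 0, j = q+2
      rw [bg_zero] at hi
      rw [bg_two]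
      have hcons : b (pw α 0) ≠ b (PFs.neg (pw α 0)) := by
        show b α ≠ b (PFs.neg α)
        rw [hi, hB4 α hi]; simp
      exact (cons_ge hB4 hB7 α 0 hcons (q + 1) (by omega)).1
    · -- i = 1, j = q+2
      rw [bg_one] at hi
      have hα : b α = true := by
        cases hc : b α with
        | true => rfl
        | false => rw [hB4 α hc] at hi; cases hi
      rw [bg_two]
      have hcons : b (pw α 0) ≠ b (PFs.neg (pw α 0)) := by
        show b α ≠ b (PFs.neg α)
        rw [hα, hi]; simp
      exact (cons_ge hB4 hB7 α 0 hcons (q + 1) (by omega)).1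
    · -- i = p+2, j = q+2
      rw [bg_two] at hi
      rw [bg_two]
      exact false_lt hB4 hB7 α hi (by omega)
  intro i j hi hj
  rcases lt_trichotomy i j with h | h | h
  · rw [asym i j h hi] at hj; cases hj
  · exact h
  · rw [asym j i h hj] at hi; cases hi

end Stmt13Aux

/-- if `b` is a `C_n`-bivaluation then
`ν(α) = (b(α), b(¬α), b(α^1), …, b(α^{n-1}))` is a well-defined snapshot for
every `α` (i.e. there is a map `ν` into `Snap n` with exactly these
coordinates), `ν` is a multialgebra homomorphism belonging to `F_{C_n}`, and
`b(α) = 1` iff `ν(α) ∈ D_n`. -/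
theorem stmt_13 (n : ℕ) (hn : 2 ≤ n) (b : PFs → Bool) (hb : IsBivN n b) :
    ∃ ν : PFs → Snap n,
      (∀ (α : PFs) (i : Fin (n + 1)), (ν α).1 i =
        if (i : ℕ) = 0 then b α
        else if (i : ℕ) = 1 then b (PFs.neg α)
        else b (pw α ((i : ℕ) - 1))) ∧
      FCn n ν ∧
      (∀ α, b α = true ↔ ν α ∈ Dn n) := by
  obtain ⟨hB1, hB2, hB3, hB4, hB5, hB6, hB7, hB8⟩ := hb
  have band : ∀ α β, b (PFs.and α β) = (b α && b β) := by
    intro α β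
    rw [Bool.eq_iff_iff, Bool.and_eq_true]; exact hB1 α β
  have bor : ∀ α β, b (PFs.or α β) = (b α || b β) := by
    intro α β
    rw [Bool.eq_iff_iff, Bool.or_eq_true]; exact hB2 α β
  have bimp : ∀ α β, b (PFs.imp α β) = (!(b α) || b β) := by
    intro α β
    rw [Bool.eq_iff_iff, Bool.or_eq_true, Bool.not_eq_true']; exact hB3 α β
  set ν : PFs → Snap n := fun α =>
    ⟨fun i => bg b α (i : ℕ), fun i j hi hj =>
      Fin.ext (bg_unique hB4 hB7 α _ _ hi hj)⟩ with hνdef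
  have v0 : ((0 : Fin (n + 1)) : ℕ) = 0 := rfl
  have v1 : ((1 : Fin (n + 1)) : ℕ) = 1 := by
    simp [Fin.val_one', Nat.mod_eq_of_lt (by omega : 1 < n + 1)]
  have cv0 : ∀ γ, (ν γ).1 0 = b γ := by
    intro γ; show bg b γ ((0 : Fin (n + 1)) : ℕ) = b γ; rw [v0, bg_zero]
  have cv1 : ∀ γ, (ν γ).1 1 = b (PFs.neg γ) := by
    intro γ; show bg b γ ((1 : Fin (n + 1)) : ℕ) = b (PFs.neg γ); rw [v1, bg_one]
  have booChar : ∀ γ, ν γ ∈ BooN n ↔ b γ ≠ b (PFs.neg γ) := by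
    intro γ
    show ((ν γ).1 0 && (ν γ).1 1) = false ↔ _
    rw [cv0, cv1]
    cases h1 : b γ with
    | false => have h2 := hB4 γ h1; simp [h2]
    | true => cases h2 : b (PFs.neg γ) <;> simp
  have hbin : ∀ (f : Bool → Bool → Bool) (γ δ ρ : PFs), b ρ = f (b γ) (b δ) →
      (b γ ≠ b (PFs.neg γ) → b δ ≠ b (PFs.neg δ) → b ρ ≠ b (PFs.neg ρ)) →
      ν ρ ∈ binN f (ν γ) (ν δ) := by
    intro f γ δ ρ h0 hcons
    unfold binN
    split_ifs with h
    · refine ⟨(booChar ρ).mpr (hcons ((booChar γ).mp h.1) ((booChar δ).mp h.2)), ?_⟩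
      rw [cv0 ρ, cv0 γ, cv0 δ, h0]
    · show (ν ρ).1 0 = f ((ν γ).1 0) ((ν δ).1 0)
      rw [cv0 ρ, cv0 γ, cv0 δ, h0]
  refine ⟨ν, fun α i => rfl, ⟨⟨?_, ?_, ?_, ?_⟩, ?_, ?_⟩, ?_⟩
  · -- neg
    intro α
    refine ⟨?_, ?_⟩
    · rw [cv0 (PFs.neg α), cv1 α]
    · rw [cv1 (PFs.neg α), cv0 α]; exact hB5 α
  · -- and
    intro α β
    exact hbin _ α β _ (band α β) (fun h1 h2 => (hB8 α β h1 h2).1)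
  · -- or
    intro α β
    exact hbin _ α β _ (bor α β) (fun h1 h2 => (hB8 α β h1 h2).2.1)
  · -- imp
    intro α β
    exact hbin _ α β _ (bimp α β) (fun h1 h2 => (hB8 α β h1 h2).2.2)
  · -- ν α = tval n 0 → ν (α ∧ ¬α) = Tval n
    intro α hν
    have hco : ∀ m, m < n + 1 → bg b α m = decide (m ≠ 0 + 2) := by
      intro m hm
      exact congrFun (congrArg Subtype.val hν) ⟨m, hm⟩
    have hα : b α = true := by
      have h := hco 0 (by omega)
      rw [bg_zero, decide_eq_true (by omega : (0:ℕ) ≠ 0 + 2)] at h; exact h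
    have hnα : b (PFs.neg α) = true := by
      have h := hco 1 (by omega)
      rw [bg_one, decide_eq_true (by omega : (1:ℕ) ≠ 0 + 2)] at h; exact h
    have h1 : b (pw α 1) = false := by
      have h := hco 2 (by omega)
      rw [show (2:ℕ) = 0 + 2 from rfl, bg_two,
        decide_eq_false (by omega : ¬((0:ℕ) + 2 ≠ 0 + 2))] at h
      exact h
    apply Subtype.ext
    funext i
    rcases i with ⟨iv, hiv⟩
    show bg b (α.and (PFs.neg α)) iv = decide (iv ≠ 1)
    have hβt : b (α.and (PFs.neg α)) = true := by rw [band, hα, hnα]; rfl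
    have hβn : b (PFs.neg (α.and (PFs.neg α))) = false := h1
    rcases iv with _ | _ | m
    · rw [bg_zero, hβt, decide_eq_true (by omega : (0:ℕ) ≠ 1)]
    · rw [bg_one, hβn, decide_eq_false (by omega : ¬((1:ℕ) ≠ 1))]
    · rw [bg_two, decide_eq_true (by omega : m + 2 ≠ 1)]
      have hcons : b (pw (α.and (PFs.neg α)) 0) ≠
          b (PFs.neg (pw (α.and (PFs.neg α)) 0)) := by
        show b (α.and (PFs.neg α)) ≠ b (PFs.neg (α.and (PFs.neg α)))
        rw [hβt, hβn]; simp
      exact (cons_ge hB4 hB7 _ 0 hcons (m + 1) (by omega)).1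
  · -- tval n k case
    intro α k hk1 hk2 hν
    have hco : ∀ m, m < n + 1 → bg b α m = decide (m ≠ k + 2) := by
      intro m hm
      exact congrFun (congrArg Subtype.val hν) ⟨m, hm⟩
    have hα : b α = true := by
      have h := hco 0 (by omega)
      rw [bg_zero, decide_eq_true (by omega : (0:ℕ) ≠ k + 2)] at h; exact h
    have hnα : b (PFs.neg α) = true := by
      have h := hco 1 (by omega)
      rw [bg_one, decide_eq_true (by omega : (1:ℕ) ≠ k + 2)] at h; exact h
    have hpw : ∀ m : ℕ, m + 1 ≤ n - 1 → m + 1 ≠ k + 1 → b (pw α (m + 1)) = true := by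
      intro m h1 h2
      have h := hco (m + 2) (by omega)
      rw [bg_two, decide_eq_true (by omega : m + 2 ≠ k + 2)] at h; exact h
    have hfk : b (pw α (k + 1)) = false := by
      by_cases hcase : k ≤ n - 2
      · have h := hco (k + 2) (by omega)
        rw [bg_two, decide_eq_false (by omega : ¬(k + 2 ≠ k + 2))] at h; exact h
      · have hkn : k = n - 1 := by omega
        have hIncon : ∀ j, j ≤ n - 1 →
            b (pw α j) = true ∧ b (PFs.neg (pw α j)) = true := by
          intro j
          induction j with
          | zero => intro _; exact ⟨hα, hnα⟩
          | succ j ih =>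
            intro hj
            have hj' := ih (by omega)
            have hpwj : b (pw α (j + 1)) = true := hpw j (by omega) (by omega)
            have h7 := hB7 (pw α j)
            rw [show pw (pw α j) 1 = pw α (j + 1) from rfl] at h7
            exact ⟨hpwj, h7.mp (hj'.1.trans hj'.2.symm)⟩
        have h6 := (hB6 α).mp
          (by rw [(hIncon (n - 1) le_rfl).1, (hIncon (n - 1) le_rfl).2])
        rw [show k + 1 = n by omega]
        exact h6
    have hpw1 : b (pw α 1) = true := hpw 0 (by omega) (by omega)
    constructor
    · -- ν (α ∧ ¬α) ∈ InN n
      have hβt : b (α.and (PFs.neg α)) = true := by rw [band, hα, hnα]; rfl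
      have hβn : b (PFs.neg (α.and (PFs.neg α))) = true := hpw1
      constructor
      · intro h
        have h' : bg b (α.and (PFs.neg α)) 1 = decide ((1:ℕ) ≠ 1) :=
          congrFun (congrArg Subtype.val h) ⟨1, by omega⟩
        rw [bg_one, hβn, decide_eq_false (by omega : ¬((1:ℕ) ≠ 1))] at h'
        cases h'
      · intro h
        have h' : bg b (α.and (PFs.neg α)) 0 = decide ((0:ℕ) ≠ 0) :=
          congrFun (congrArg Subtype.val h) ⟨0, by omega⟩
        rw [bg_zero, hβt, decide_eq_false (by omega : ¬((0:ℕ) ≠ 0))] at h'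
        cases h'
    · -- ν (α^1) = tval n (k-1)
      apply Subtype.ext
      funext i
      rcases i with ⟨iv, hiv⟩
      show bg b (pw α 1) iv = decide (iv ≠ (k - 1) + 2)
      rw [show (k - 1) + 2 = k + 1 by omega]
      rcases iv with _ | _ | m
      · rw [bg_zero, hpw1, decide_eq_true (by omega : (0:ℕ) ≠ k + 1)]
      · rw [bg_one, decide_eq_true (by omega : (1:ℕ) ≠ k + 1)]
        have h7 := hB7 α
        exact h7.mp (hα.trans hnα.symm)
      · rw [bg_two, pw_pw, show 1 + (m + 1) = m + 1 + 1 from by omega]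
        rcases lt_trichotomy (m + 2) (k + 1) with h | h | h
        · rw [decide_eq_true (by omega : m + 1 + 1 ≠ k + 1)]
          exact hpw (m + 1) (by omega) (by omega)
        · rw [decide_eq_false (by omega : ¬(m + 1 + 1 ≠ k + 1))]
          rw [show m + 1 + 1 = k + 1 from by omega]
          exact hfk
        · rw [decide_eq_true (by omega : m + 1 + 1 ≠ k + 1)]
          exact false_lt hB4 hB7 α hfk (by omega)
  · -- designated values
    intro α
    show b α = true ↔ (ν α).1 0 = true
    rw [cv0]
end
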